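/- Let c ≥ 1, q ≥ 1, and x_0, ..., x_{λ-1} be positive integers. Then [q+c, x_0, ..., x_{λ-1}, q]* ≥ c·F_{λ+1}, where F_{λ+1} is the (λ+1)-st Fibonacci number (F_1 = F_2 = 1). -/

import Mathlib

/-- The continuant of a finite sequence of integers. -/
def cont : List ℤ → ℤ
  | [] => 1
  | [a] => a
  | a :: b :: l => a * cont (b :: l) + cont l


/-- The anticontinuant `[q₀,…,q_{s-1}]* = [q₀,…,q_{s-2}] − [q₁,…,q_{s-1}]`. -/
def anticont (l : List ℤ) : ℤ := cont l.dropLast - cont l.tail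

/-
Peeling `q + c` off the front and `q` off the back turns the anticontinuant into
`c·[x] + [x₁,…,x_{λ-1}] − [x₀,…,x_{λ-2}]`, in which `q` has cancelled. Since every entry is at
least `1`, `[x] ≥ F_{λ+1}`, `[x₁,…,x_{λ-1}] ≥ F_λ` and `[x] − [x₀,…,x_{λ-2}] ≥ F_{λ-1}`, so the
expression is at least `(c − 1)·F_{λ+1} + F_λ + F_{λ-1} = c·F_{λ+1}`.
-/

open Nat (fib)

theorem cont_cons_cons (a b : ℤ) (l : List ℤ) :
    cont (a :: b :: l) = a * cont (b :: l) + cont l := rfl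

theorem cont_cons_of_ne_nil (a : ℤ) {l : List ℤ} (hl : l ≠ []) :
    cont (a :: l) = a * cont l + cont l.tail := by
  obtain ⟨b, l, rfl⟩ := List.exists_cons_of_ne_nil hl
  rfl

theorem cont_append_pair (a b : ℤ) : ∀ l : List ℤ,
    cont (l ++ [a, b]) = b * cont (l ++ [a]) + cont l
  | [] => by simp only [List.nil_append, cont]; ring
  | [x] => by simp only [List.cons_append, List.nil_append, cont]; ring
  | x :: y :: l => by
    have hyl := cont_append_pair a b (y :: l)
    have hl := cont_append_pair a b l
    simp only [List.cons_append] at hyl ⊢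
    rw [cont_cons_cons, cont_cons_cons, cont_cons_cons, hyl, hl]
    ring

theorem cont_append_singleton_of_ne_nil (b : ℤ) {l : List ℤ} (hl : l ≠ []) :
    cont (l ++ [b]) = b * cont l + cont l.dropLast := by
  obtain ⟨m, a, rfl⟩ := (List.eq_nil_or_concat l).resolve_left hl
  simpa using cont_append_pair a b m

theorem anticont_cons_append_singleton (a b : ℤ) {x : List ℤ} (hx : x ≠ []) :
    anticont (a :: (x ++ [b])) = (a - b) * cont x + cont x.tail - cont x.dropLast := by
  have hdrop : (a :: (x ++ [b])).dropLast = a :: x := by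
    rw [← List.cons_append, List.dropLast_concat]
  rw [anticont, hdrop, List.tail_cons, cont_cons_of_ne_nil a hx,
    cont_append_singleton_of_ne_nil b hx]
  ring

theorem fib_le_cont : ∀ l : List ℤ, (∀ a ∈ l, 0 < a) → (fib (l.length + 1) : ℤ) ≤ cont l
  | [], _ => by simp [cont]
  | [a], h => by simpa [cont] using Int.add_one_le_of_lt (h a (by simp))
  | a :: b :: l, h => by
    have hbl := fib_le_cont (b :: l) fun t ht => h t (by simp [ht])
    have hl := fib_le_cont l fun t ht => h t (by simp [ht])
    have ha : 1 ≤ a := h a (by simp)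
    have hbl_nonneg : 0 ≤ cont (b :: l) := le_trans (by positivity) hbl
    calc (fib ((a :: b :: l).length + 1) : ℤ)
        = fib (l.length + 1) + fib ((b :: l).length + 1) := by
          simp [Nat.fib_add_two, add_assoc]
      _ ≤ cont l + a * cont (b :: l) :=
          add_le_add hl (le_trans hbl (le_mul_of_one_le_left hbl_nonneg ha))
      _ = cont (a :: b :: l) := by rw [cont_cons_cons, add_comm]

theorem fib_length_le_cont_append_singleton_sub {m : List ℤ} (hm : ∀ a ∈ m, 0 < a) {b : ℤ}
    (hb : 1 ≤ b) : (fib m.length : ℤ) ≤ cont (m ++ [b]) - cont m := by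
  rcases eq_or_ne m [] with rfl | hne
  · simpa [cont] using hb
  have hdrop : (fib m.length : ℤ) ≤ cont m.dropLast := by
    have := fib_le_cont m.dropLast fun a ha => hm a (List.dropLast_subset m ha)
    rwa [List.length_dropLast, Nat.sub_add_cancel (List.length_pos_of_ne_nil hne)] at this
  have hm_nonneg : 0 ≤ cont m := le_trans (by positivity) (fib_le_cont m hm)
  rw [cont_append_singleton_of_ne_nil b hne]
  linarith [le_mul_of_one_le_left hm_nonneg hb]

theorem anticont_ge_fib_general (q c : ℤ) (hc : 1 ≤ c)
    (x : List ℤ) (hxpos : ∀ a ∈ x, 0 < a) :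
    c * (Nat.fib (x.length + 1) : ℤ) ≤ anticont ((q + c) :: (x ++ [q])) := by
  rcases List.eq_nil_or_concat x with rfl | ⟨m, b, rfl⟩
  · simp [anticont, cont]
  simp only [List.concat_eq_append] at hxpos ⊢
  have hm : ∀ a ∈ m, 0 < a := fun a ha => hxpos a (by simp [ha])
  have hx : (fib (m.length + 2) : ℤ) ≤ cont (m ++ [b]) := by
    simpa using fib_le_cont _ hxpos
  have htail : (fib (m.length + 1) : ℤ) ≤ cont (m ++ [b]).tail := by
    simpa using fib_le_cont _ fun a ha => hxpos a (List.mem_of_mem_tail ha)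
  have hlast := fib_length_le_cont_append_singleton_sub hm (hxpos b (by simp))
  rw [anticont_cons_append_singleton _ _ (by simp), List.dropLast_concat, add_sub_cancel_left]
  simp only [List.length_append, List.length_singleton, Nat.fib_add_two] at hx ⊢
  push_cast at hx ⊢
  linarith [mul_le_mul_of_nonneg_left hx (sub_nonneg.mpr hc)]

/-- `[q+c, x₀,…,x_{λ-1}, q]* ≥ c·F_{λ+1}`. -/
theorem anticont_ge_fib (q c : ℤ) (hq : 1 ≤ q) (hc : 1 ≤ c)
    (x : List ℤ) (hxpos : ∀ a ∈ x, 0 < a) :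
    c * (Nat.fib (x.length + 1) : ℤ) ≤ anticont ((q + c) :: (x ++ [q])) :=
  anticont_ge_fib_general q c hc x hxpos
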